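/- arXiv:2003.13639 — 4 statements merged into one kernel-verified Lean document; each statement's English description precedes it below -/
import Mathlib

section
/- Let $\ket{\psi} = \sum_{i=1}^{d^k} \alpha_i \ket{x^i_1 \cdots x^i_N}$ be a $k$-uniform state of $N$ qudits with minimal support $d^k$ (all $\alpha_i \neq 0$). Then for any two distinct indices $i \neq j$, the computational-basis strings $(x^i_1,\dots,x^i_N)$ and $(x^j_1,\dots,x^j_N)$ coincide in at most $k-1$ positions. -/
/-!
If two support strings `x i ≠ x j` agreed on a set `S` of `k` positions, restricting the
`d ^ k` support strings to `S` would miss some word `a : S → Fin d`. The diagonal entry of the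
reduction to `S` at `a` would then vanish, so by uniformity the whole reduction vanishes; but its
diagonal entry at the restriction of `x i` is at least `|α i|² > 0`.
-/

/-- Combine an assignment on `S` and on its complement into a full assignment. -/
def mergeFn {N : ℕ} {A : Type*} (S : Finset (Fin N)) (a : {i // i ∈ S} → A)
    (g : {i // i ∉ S} → A) : Fin N → A :=
  fun i => if h : i ∈ S then a ⟨i, h⟩ else g ⟨i, h⟩

/-- The reduced density matrix of a pure state `ψ` on the subsystem `S`. -/
noncomputable def reducedMatrix {N d : ℕ} (ψ : (Fin N → Fin d) → ℂ) (S : Finset (Fin N)) :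
    Matrix ({i // i ∈ S} → Fin d) ({i // i ∈ S} → Fin d) ℂ :=
  fun a b => ∑ g : {i // i ∉ S} → Fin d,
    ψ (mergeFn S a g) * star (ψ (mergeFn S b g))

/-- A state is `k`-uniform if every reduction to `k` parties is proportional to the identity. -/
def IsUniform {N d : ℕ} (k : ℕ) (ψ : (Fin N → Fin d) → ℂ) : Prop :=
  ∀ S : Finset (Fin N), S.card = k →
    ∃ c : ℂ, reducedMatrix ψ S = c • (1 : Matrix _ _ ℂ)

theorem mergeFn_restrict {N : ℕ} {A : Type*} (S : Finset (Fin N)) (f : Fin N → A) :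
    mergeFn S (S.restrict f) (fun m => f m) = f := by
  funext m
  unfold mergeFn
  split <;> rfl

theorem restrict_mergeFn {N : ℕ} {A : Type*} (S : Finset (Fin N)) (a : {i // i ∈ S} → A)
    (g : {i // i ∉ S} → A) : S.restrict (mergeFn S a g) = a := by
  funext m
  simp [mergeFn, m.2]

section ReducedMatrix

variable {N d : ℕ} {ψ : (Fin N → Fin d) → ℂ} {S : Finset (Fin N)}

theorem reducedMatrix_apply_self (a : {i // i ∈ S} → Fin d) :
    reducedMatrix ψ S a a = ∑ g, (Complex.normSq (ψ (mergeFn S a g)) : ℂ) := by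
  simp only [reducedMatrix, Complex.star_def, Complex.mul_conj]

theorem reducedMatrix_apply_self_eq_zero_iff (a : {i // i ∈ S} → Fin d) :
    reducedMatrix ψ S a a = 0 ↔ ∀ g, ψ (mergeFn S a g) = 0 := by
  rw [reducedMatrix_apply_self, ← Complex.ofReal_sum, Complex.ofReal_eq_zero,
    Finset.sum_eq_zero_iff_of_nonneg fun g _ => Complex.normSq_nonneg _]
  simp only [Finset.mem_univ, true_implies, Complex.normSq_eq_zero]

theorem IsUniform.exists_restrict_eq {k : ℕ} (h : IsUniform k ψ) (hS : S.card = k)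
    {f : Fin N → Fin d} (hf : ψ f ≠ 0) (a : {i // i ∈ S} → Fin d) :
    ∃ f', ψ f' ≠ 0 ∧ S.restrict f' = a := by
  obtain ⟨c, hc⟩ := h S hS
  have hdiag : ∀ b, reducedMatrix ψ S b b = c := fun b => by simp [hc]
  have hc0 : c ≠ 0 := by
    rw [← hdiag (S.restrict f), Ne, reducedMatrix_apply_self_eq_zero_iff, not_forall]
    exact ⟨fun m => f m, by rwa [mergeFn_restrict]⟩
  rw [← hdiag a, Ne, reducedMatrix_apply_self_eq_zero_iff, not_forall] at hc0
  obtain ⟨g, hg⟩ := hc0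
  exact ⟨mergeFn S a g, hg, restrict_mergeFn S a g⟩

end ReducedMatrix

section Superposition

variable {ι β M : Type*} [Fintype ι] [DecidableEq β] [AddCommMonoid M] {α : ι → M} {x : ι → β}

theorem mem_range_of_sum_ite_ne_zero {f : β} (hf : (∑ i, if f = x i then α i else 0) ≠ 0) :
    f ∈ Set.range x := by
  obtain ⟨i, -, hi⟩ := Finset.exists_ne_zero_of_sum_ne_zero hf
  exact ⟨i, (ite_ne_right_iff.mp hi).1.symm⟩

theorem sum_ite_apply_of_injective (hx : Function.Injective x) (l : ι) :
    (∑ i, if x l = x i then α i else 0) = α l := by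
  classical
  simp [hx.eq_iff]

end Superposition

theorem support_strings_coincide_le_general {N d k : ℕ}
    (α : Fin (d ^ k) → ℂ) (x : Fin (d ^ k) → Fin N → Fin d)
    (hx : Function.Injective x) (hα : ∀ i, α i ≠ 0)
    (h : IsUniform k (fun f => ∑ i, if f = x i then α i else 0)) :
    ∀ i j, i ≠ j →
      (Finset.univ.filter (fun m => x i m = x j m)).card ≤ k - 1 := by
  intro i j hij
  by_contra! hcard
  obtain ⟨S, hSsub, hScard⟩ := Finset.exists_subset_card_eq (Nat.le_of_pred_lt hcard)
  have hsurj : Function.Surjective fun l => S.restrict (x l) := fun a => by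
    obtain ⟨f, hf, rfl⟩ := h.exists_restrict_eq hScard
      (by rw [sum_ite_apply_of_injective hx]; exact hα i) a
    obtain ⟨l, rfl⟩ := mem_range_of_sum_ite_ne_zero hf
    exact ⟨l, rfl⟩
  have hinj := ((Fintype.bijective_iff_surjective_and_card _).2 ⟨hsurj, by simp [hScard]⟩).1
  exact hij (hinj (funext fun m => (Finset.mem_filter.mp (hSsub m.2)).2))

/-- In a `k`-uniform state with minimal support `d^k`, any two distinct support strings
coincide in at most `k-1` positions. -/
theorem support_strings_coincide_le {N d k : ℕ} (hk : k ≤ N)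
    (α : Fin (d ^ k) → ℂ) (x : Fin (d ^ k) → Fin N → Fin d)
    (hx : Function.Injective x) (hα : ∀ i, α i ≠ 0)
    (h : IsUniform k (fun f => ∑ i, if f = x i then α i else 0)) :
    ∀ i j, i ≠ j →
      (Finset.univ.filter (fun m => x i m = x j m)).card ≤ k - 1 :=
  support_strings_coincide_le_general α x hx hα h
end

section
/- If $L : [d]^k \to [d]^k$ is a $k$-mutually orthogonal Latin hypercube and $L$ maps a combinatorial rectangle $S_1 \times \cdots \times S_k$ onto another combinatorial rectangle $S_1' \times \cdots \times S_k'$ (with all $S_i, S_i'$ nonempty), then all the sets $S_1,\dots,S_k,S_1',\dots,S_k'$ have the same cardinality. -/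
/-- A `k`-mutually orthogonal Latin hypercube of size `d`: a bijection `L : [d]^k → [d]^k`
such that for every choice of fixed coordinates `F` with values `g` (defining a slice of
the input cube) and every set `S'` of output coordinates with `|F| + |S'| = k`, the map
from the slice to the projection onto `S'` is a bijection. -/
def IsMOLH (d k : ℕ) (L : (Fin k → Fin d) → (Fin k → Fin d)) : Prop :=
  Function.Bijective L ∧
  ∀ (F : Finset (Fin k)) (g : Fin k → Fin d) (S' : Finset (Fin k)),
    F.card + S'.card = k →
    Function.Bijective
      (fun x : {f : Fin k → Fin d // ∀ i ∈ F, f i = g i} =>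
        (fun i : {i // i ∈ S'} => L x.1 i.1))

/-!
Fix a point `f` of the rectangle `S`. Moving only its `j`-th coordinate inside `S j` stays in
the rectangle, and the MOLH property for the slice `{j}ᶜ` and the output `{m}` says that the
`m`-th output coordinate is then injective; hence `|S j| ≤ |S' m|` for all `j`, `m`.
Since `L` is a bijection of the rectangles, `∏ |S i| = ∏ |S' i|`, and squeezing both products
against `c ^ k`, where `c = min |S' m|`, forces all the cardinalities to equal `c`.
-/

open Finset Fintype

theorem Finset.eq_of_le_of_prod_eq {ι R : Type*} [CommMonoidWithZero R] [PartialOrder R]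
    [ZeroLEOneClass R] [PosMulStrictMono R] [Nontrivial R] {s : Finset ι} {f g : ι → R}
    (hf : ∀ i ∈ s, 0 < f i) (hfg : ∀ i ∈ s, f i ≤ g i)
    (hprod : ∏ i ∈ s, f i = ∏ i ∈ s, g i) : ∀ i ∈ s, f i = g i := by
  by_contra! ⟨i, hi, hne⟩
  exact (prod_lt_prod hf hfg ⟨i, hi, (hfg i hi).lt_of_ne hne⟩).ne hprod

theorem exists_eq_const_of_le_of_prod_eq {ι : Type*} [Fintype ι] {a b : ι → ℕ}
    (ha : ∀ i, 0 < a i) (hab : ∀ i j, a i ≤ b j) (hprod : ∏ i, a i = ∏ i, b i) :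
    ∃ c, (∀ i, a i = c) ∧ ∀ i, b i = c := by
  cases isEmpty_or_nonempty ι
  · exact ⟨0, isEmptyElim, isEmptyElim⟩
  obtain ⟨m, hm⟩ := Finite.exists_min b
  have hle_min : ∏ i, a i ≤ ∏ _i : ι, b m :=
    prod_le_prod (fun _ _ ↦ Nat.zero_le _) fun i _ ↦ hab i m
  have hmin_le : ∏ _i : ι, b m ≤ ∏ i, b i :=
    prod_le_prod (fun _ _ ↦ Nat.zero_le _) fun i _ ↦ hm i
  have ha_eq : ∀ i ∈ univ, a i = b m :=
    eq_of_le_of_prod_eq (fun i _ ↦ ha i) (fun i _ ↦ hab i m) (by omega)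
  have hb_eq : ∀ i ∈ univ, b m = b i :=
    eq_of_le_of_prod_eq (fun _ _ ↦ (ha m).trans_le (hab m m)) (fun i _ ↦ hm i) (by omega)
  exact ⟨b m, fun i ↦ ha_eq i (mem_univ i), fun i ↦ (hb_eq i (mem_univ i)).symm⟩

theorem prod_card_eq_of_image_piFinset_eq {ι α β : Type*} [Fintype ι] [DecidableEq ι]
    [DecidableEq (ι → β)] {L : (ι → α) → ι → β} (hL : Function.Injective L)
    {S : ι → Finset α} {S' : ι → Finset β} (him : (piFinset S).image L = piFinset S') :
    ∏ i, #(S i) = ∏ i, #(S' i) := by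
  rw [← card_piFinset, ← card_piFinset, ← him, card_image_of_injective _ hL]

namespace IsMOLH

variable {d k : ℕ} {L : (Fin k → Fin d) → Fin k → Fin d}

theorem injective_update_apply (h : IsMOLH d k L) (f : Fin k → Fin d) (j m : Fin k) :
    Function.Injective fun a ↦ L (Function.update f j a) m := by
  have hcard : #({j}ᶜ : Finset (Fin k)) + #({m} : Finset (Fin k)) = k := by
    rw [card_compl, card_singleton, card_singleton, Fintype.card_fin]
    have := j.pos
    omega
  have hslice : ∀ a, ∀ i ∈ ({j}ᶜ : Finset (Fin k)), Function.update f j a i = f i :=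
    fun a i hi ↦ Function.update_of_ne (by simpa using hi) _ _
  intro a b hab
  have hslice_eq := (h.2 {j}ᶜ f {m} hcard).1
    (a₁ := ⟨_, hslice a⟩) (a₂ := ⟨_, hslice b⟩) <| by
      funext ⟨i, hi⟩
      obtain rfl : i = m := mem_singleton.1 hi
      exact hab
  simpa using congrFun (congrArg Subtype.val hslice_eq) j

theorem card_le_card (h : IsMOLH d k L) {S S' : Fin k → Finset (Fin d)}
    (hS : ∀ i, (S i).Nonempty) (hmaps : ∀ x ∈ piFinset S, L x ∈ piFinset S') (j m : Fin k) :
    #(S j) ≤ #(S' m) := by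
  choose f hf using hS
  refine card_le_card_of_injOn (fun a ↦ L (Function.update f j a) m) (fun a ha ↦ ?_)
    (h.injective_update_apply f j m).injOn
  refine mem_piFinset.1 (hmaps _ (mem_piFinset.2 fun i ↦ ?_)) m
  rcases eq_or_ne i j with rfl | hij
  · simpa using ha
  · simpa [Function.update_of_ne hij] using hf i

end IsMOLH

theorem molh_rectangle_to_cube_general {d k : ℕ}
    (L : (Fin k → Fin d) → (Fin k → Fin d)) (h : IsMOLH d k L)
    (S S' : Fin k → Finset (Fin d))
    (hS : ∀ i, (S i).Nonempty)
    (him : L '' {f : Fin k → Fin d | ∀ i, f i ∈ S i} =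
      {f : Fin k → Fin d | ∀ i, f i ∈ S' i}) :
    ∃ c : ℕ, (∀ i, (S i).card = c) ∧ (∀ i, (S' i).card = c) := by
  have himage : (piFinset S).image L = piFinset S' := by
    apply coe_injective
    simpa [Set.ext_iff] using him
  have hmaps : ∀ x ∈ piFinset S, L x ∈ piFinset S' :=
    fun x hx ↦ himage ▸ mem_image_of_mem L hx
  exact exists_eq_const_of_le_of_prod_eq (fun i ↦ card_pos.2 (hS i)) (h.card_le_card hS hmaps)
    (prod_card_eq_of_image_piFinset_eq h.1.1 himage)

/-- If a `k`-MOLH maps a nonempty combinatorial rectangle onto a combinatorial rectangle,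
then all the factor sets have the same cardinality. -/
theorem molh_rectangle_to_cube {d k : ℕ}
    (L : (Fin k → Fin d) → (Fin k → Fin d)) (h : IsMOLH d k L)
    (S S' : Fin k → Finset (Fin d))
    (hS : ∀ i, (S i).Nonempty) (hS' : ∀ i, (S' i).Nonempty)
    (him : L '' {f : Fin k → Fin d | ∀ i, f i ∈ S i} =
      {f : Fin k → Fin d | ∀ i, f i ∈ S' i}) :
    ∃ c : ℕ, (∀ i, (S i).card = c) ∧ (∀ i, (S' i).card = c) :=
  molh_rectangle_to_cube_general L h S S' hS him
end

section
/- For any $N \ge 2$ and $d \ge 2$, every $1$-uniform state of $N$ qudits with minimal support $d$ is LU-equivalent to the generalized GHZ state $\frac{1}{\sqrt{d}}\sum_{i=0}^{d-1}\ket{i,\dots,i}$. That is, if $\ket{\psi} = \frac{1}{\sqrt{d}}\sum_{i=0}^{d-1}\omega_i \ket{j^1_i,\dots,j^N_i}$ with $|\omega_i| = 1$, where for each position $\ell$ the map $i \mapsto j^\ell_i$ is a bijection of $\{0,\dots,d-1\}$, then there exist unitaries $U_1,\dots,U_N$ on $\mathbb{C}^d$ with $(U_1\otimes\cdots\otimes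 U_N)\ket{\psi} = \ket{\mathrm{GHZ}_d^N}$. -/
/-!
Write the state as `∑ᵢ ωᵢ |b₁(i), …, b_N(i)⟩` with permutations `b_ℓ`. The monomial unitary
`U_ℓ = diag(c_ℓ) · P(b_ℓ)` sends `|b_ℓ(x)⟩` to `c_ℓ(x) |x⟩`, so `U₁ ⊗ ⋯ ⊗ U_N` sends the `i`-th
term to `(∏_ℓ c_ℓ(i)) ωᵢ |i, …, i⟩`. Putting all the phases `ωᵢ⁻¹` on a single party makes this
`|i, …, i⟩`, which turns the state into the GHZ state.
-/

open Finset Matrix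

section

variable {n : Type*} [Fintype n] [DecidableEq n]

theorem Matrix.permMatrix_mem_unitaryGroup {𝕜 : Type*} [RCLike 𝕜] (σ : Equiv.Perm n) :
    σ.permMatrix 𝕜 ∈ unitaryGroup n 𝕜 := by
  rw [mem_unitaryGroup_iff, star_eq_conjTranspose, conjTranspose_permMatrix, ← permMatrix_mul,
    inv_mul_cancel, permMatrix_one]

theorem Matrix.diagonal_mem_unitaryGroup {𝕜 : Type*} [RCLike 𝕜] {c : n → 𝕜}
    (hc : ∀ x, ‖c x‖ = 1) : diagonal c ∈ unitaryGroup n 𝕜 := by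
  rw [mem_unitaryGroup_iff, star_eq_conjTranspose, diagonal_conjTranspose, diagonal_mul_diagonal,
    ← diagonal_one]
  congr 1
  ext x
  simp [RCLike.mul_conj, hc x]

theorem Matrix.diagonal_mul_permMatrix_apply {R : Type*} [NonAssocSemiring R] (c : n → R)
    (σ : Equiv.Perm n) (x y : n) :
    (diagonal c * σ.permMatrix R) x y = if σ x = y then c x else 0 := by
  simp [diagonal_mul, PEquiv.toMatrix_apply]

end

theorem exists_norm_eq_one_prod_mul_eq_one {ι n 𝕜 : Type*} [Fintype ι] [DecidableEq ι]
    [Nonempty ι] [RCLike 𝕜] {ω : n → 𝕜} (hω : ∀ x, ‖ω x‖ = 1) :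
    ∃ c : ι → n → 𝕜, (∀ ℓ x, ‖c ℓ x‖ = 1) ∧ ∀ x, (∏ ℓ, c ℓ x) * ω x = 1 := by
  have hω₀ : ∀ x, ω x ≠ 0 := fun x h => by simpa [h] using hω x
  obtain ⟨z⟩ := ‹Nonempty ι›
  refine ⟨Pi.mulSingle z ω⁻¹, fun ℓ x => ?_, fun x => ?_⟩
  · rcases eq_or_ne ℓ z with rfl | hℓ
    · simp [hω x]
    · simp [hℓ]
  · rw [← prod_apply, prod_pi_mulSingle', if_pos (mem_univ z), Pi.inv_apply,
      inv_mul_cancel₀ (hω₀ x)]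

section

variable {ι n R : Type*} [Fintype ι] [Fintype n] [DecidableEq n] [CommSemiring R]

theorem sum_prod_mul_sum_ite_forall_eq {κ : Type*} [DecidableEq ι] [Fintype κ]
    (U : ι → Matrix n n R) (b : ι → κ → n) [∀ (g : ι → n) i, Decidable (∀ ℓ, g ℓ = b ℓ i)]
    (ω : κ → R) (f : ι → n) :
    ∑ g : ι → n, (∏ ℓ, U ℓ (f ℓ) (g ℓ)) * ∑ i, (if ∀ ℓ, g ℓ = b ℓ i then ω i else 0) =
      ∑ i, (∏ ℓ, U ℓ (f ℓ) (b ℓ i)) * ω i := by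
  simp_rw [mul_sum, mul_ite, mul_zero]
  rw [sum_comm]
  refine sum_congr rfl fun i _ => ?_
  simp_rw [← funext_iff]
  simp

theorem sum_prod_diagonal_mul_permMatrix_apply (c : ι → n → R)
    (b : ι → Equiv.Perm n) (ω : n → R) (hcω : ∀ x, (∏ ℓ, c ℓ x) * ω x = 1) (f : ι → n)
    [∀ i, Decidable (∀ ℓ, f ℓ = i)] :
    ∑ i, (∏ ℓ, (diagonal (c ℓ) * (b ℓ).permMatrix R) (f ℓ) (b ℓ i)) * ω i =
      ∑ i, if ∀ ℓ, f ℓ = i then 1 else 0 := by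
  refine sum_congr rfl fun i _ => ?_
  simp_rw [diagonal_mul_permMatrix_apply, (b _).injective.eq_iff, Fintype.prod_ite_zero]
  split_ifs with h
  · simp_rw [h]
    exact hcω i
  · exact zero_mul _

end

theorem one_uniform_minimal_LU_GHZ_general {N d : ℕ} (hN : 2 ≤ N)
    (ω : Fin d → ℂ) (hω : ∀ i, ‖ω i‖ = 1)
    (b : Fin N → Equiv.Perm (Fin d)) :
    ∃ U : Fin N → Matrix (Fin d) (Fin d) ℂ,
      (∀ ℓ, U ℓ ∈ Matrix.unitaryGroup (Fin d) ℂ) ∧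
      ∀ f : Fin N → Fin d,
        (∑ g : Fin N → Fin d, (∏ ℓ, U ℓ (f ℓ) (g ℓ)) *
          (((Real.sqrt d : ℂ))⁻¹ *
            ∑ i : Fin d, if (∀ ℓ, g ℓ = b ℓ i) then ω i else 0)) =
        ((Real.sqrt d : ℂ))⁻¹ *
          ∑ i : Fin d, if (∀ ℓ, f ℓ = i) then 1 else 0 := by
  have : Nonempty (Fin N) := ⟨⟨0, by omega⟩⟩
  obtain ⟨c, hc, hcω⟩ := exists_norm_eq_one_prod_mul_eq_one (ι := Fin N) hω
  set U : Fin N → Matrix (Fin d) (Fin d) ℂ := fun ℓ => diagonal (c ℓ) * (b ℓ).permMatrix ℂ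
  refine ⟨U, fun ℓ => mul_mem (diagonal_mem_unitaryGroup (hc ℓ)) (permMatrix_mem_unitaryGroup _),
    fun f => ?_⟩
  simp_rw [mul_left_comm _ ((Real.sqrt d : ℂ))⁻¹, ← mul_sum]
  rw [sum_prod_mul_sum_ite_forall_eq, sum_prod_diagonal_mul_permMatrix_apply c b ω hcω]

/-- Every `1`-uniform state of `N` qudits with minimal support `d`, i.e.
`ψ = (1/√d) ∑ᵢ ωᵢ |j¹ᵢ,…,jᴺᵢ⟩` with unimodular phases `ωᵢ` and each local map
`i ↦ jℓᵢ` a bijection, is LU-equivalent to the generalized GHZ state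
`(1/√d) ∑ᵢ |i,…,i⟩`. -/
theorem one_uniform_minimal_LU_GHZ {N d : ℕ} (hN : 2 ≤ N) (hd : 2 ≤ d)
    (ω : Fin d → ℂ) (hω : ∀ i, ‖ω i‖ = 1)
    (b : Fin N → Equiv.Perm (Fin d)) :
    ∃ U : Fin N → Matrix (Fin d) (Fin d) ℂ,
      (∀ ℓ, U ℓ ∈ Matrix.unitaryGroup (Fin d) ℂ) ∧
      ∀ f : Fin N → Fin d,
        (∑ g : Fin N → Fin d, (∏ ℓ, U ℓ (f ℓ) (g ℓ)) *
          (((Real.sqrt d : ℂ))⁻¹ *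
            ∑ i : Fin d, if (∀ ℓ, g ℓ = b ℓ i) then ω i else 0)) =
        ((Real.sqrt d : ℂ))⁻¹ *
          ∑ i : Fin d, if (∀ ℓ, f ℓ = i) then 1 else 0 :=
  one_uniform_minimal_LU_GHZ_general hN ω hω b
end

section
/- The four-fold tensor power of the $3 \times 3$ Fourier matrix $F_3 = \frac{1}{\sqrt{3}}\begin{pmatrix}1&1&1\\1&\omega&\bar\omega\\1&\bar\omega&\omega\end{pmatrix}$ (with $\omega = e^{2\pi i/3}$) maps the state $\ket{\mathrm{AME}(4,3)} = \frac{1}{3}\sum_{i,j=0}^{2}\ket{i,j,i+j,2i+j}$ (addition mod 3) to itself, up to a global phase. -/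
/-!
The support of `ame43` is the linear code `C = {(i, j, i + j, 2i + j)} ⊆ 𝔽₃⁴`, and `F₃^{⊗4}` sends
the uniform superposition over a linear code to the uniform superposition over its dual code, by
orthogonality of the characters `x ↦ ω^{xy}`. Here `C` is self-dual: `f ∈ C` iff `f` is orthogonal
to the generators `(1, 0, 1, 2)` and `(0, 1, 1, 1)`. Hence the state is fixed, with phase `1`.
-/

/-- The `3 × 3` Fourier matrix `(F₃)ⱼₖ = ωʲᵏ/√3` with `ω = e^{2πi/3}`. -/
noncomputable def F3 : Matrix (ZMod 3) (ZMod 3) ℂ :=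
  fun j k => Complex.exp (2 * Real.pi * Complex.I / 3) ^ (j.val * k.val) / Real.sqrt 3

/-- The AME(4,3) state `(1/3) ∑_{i,j} |i, j, i+j, 2i+j⟩` (arithmetic mod 3). -/
noncomputable def ame43 : (Fin 4 → ZMod 3) → ℂ :=
  fun f => (1 / 3 : ℂ) * ∑ i : ZMod 3, ∑ j : ZMod 3,
    if f 0 = i ∧ f 1 = j ∧ f 2 = i + j ∧ f 3 = 2 * i + j then 1 else 0

open Complex ZMod

lemma exp_two_pi_I_div_pow (N : ℕ) [NeZero N] (n : ℕ) :
    exp (2 * Real.pi * I / N) ^ n = stdAddChar (n : ZMod N) := by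
  have h := stdAddChar_coe (N := N) n
  push_cast at h
  rw [h, ← exp_nat_mul]
  ring_nf

lemma F3_apply (j k : ZMod 3) : F3 j k = stdAddChar (j * k) / Real.sqrt 3 := by
  have h := exp_two_pi_I_div_pow 3 (j.val * k.val)
  push_cast [natCast_zmod_val] at h
  rw [F3, h]

def ame43Word (i j : ZMod 3) : Fin 4 → ZMod 3 := ![i, j, i + j, 2 * i + j]

lemma eq_ame43Word_iff (g : Fin 4 → ZMod 3) (i j : ZMod 3) :
    g = ame43Word i j ↔ g 0 = i ∧ g 1 = j ∧ g 2 = i + j ∧ g 3 = 2 * i + j := by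
  refine ⟨by rintro rfl; simp [ame43Word], fun ⟨h0, h1, h2, h3⟩ => ?_⟩
  funext ℓ
  fin_cases ℓ <;> simp [ame43Word, *]

lemma sum_mul_ame43 (U : (Fin 4 → ZMod 3) → ℂ) :
    ∑ g, U g * ame43 g = 1 / 3 * ∑ i, ∑ j, U (ame43Word i j) := by
  simp only [ame43, ← eq_ame43Word_iff, Finset.mul_sum, mul_ite, mul_one, mul_zero]
  rw [Finset.sum_comm]
  refine Finset.sum_congr rfl fun i _ => ?_
  rw [Finset.sum_comm]
  simp [mul_comm]

lemma ame43_eq_ite (f : Fin 4 → ZMod 3) :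
    ame43 f = if f 2 = f 0 + f 1 ∧ f 3 = 2 * f 0 + f 1 then 1 / 3 else 0 := by
  simp [ame43, ite_and]

lemma ame43Word_eqns_iff_orthogonal (a b c d : ZMod 3) :
    c = a + b ∧ d = 2 * a + b ↔ a + c + 2 * d = 0 ∧ b + c + d = 0 := by
  decide +revert

lemma prod_F3_ame43Word (f : Fin 4 → ZMod 3) (i j : ZMod 3) :
    ∏ ℓ, F3 (f ℓ) (ame43Word i j ℓ) =
      stdAddChar (i * (f 0 + f 2 + 2 * f 3)) * stdAddChar (j * (f 1 + f 2 + f 3)) / 9 := by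
  have hsqrt3_sq : (Real.sqrt 3 : ℂ) * Real.sqrt 3 = 3 := by
    rw [← ofReal_mul, Real.mul_self_sqrt zero_le_three, ofReal_ofNat]
  have hsqrt3_pow4 : (Real.sqrt 3 : ℂ) * Real.sqrt 3 * Real.sqrt 3 * Real.sqrt 3 = 9 := by
    linear_combination (Real.sqrt 3 * Real.sqrt 3 + 3 : ℂ) * hsqrt3_sq
  simp only [Fin.prod_univ_four, F3_apply, div_mul_div_comm, ← AddChar.map_add_eq_mul, hsqrt3_pow4]
  congr 2
  simp only [ame43Word, Matrix.cons_val]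
  ring

/-- `F₃^{⊗4}` maps the AME(4,3) state to itself up to a global phase. -/
theorem F3_pow4_preserves_ame43 :
    ∃ c : ℂ, ‖c‖ = 1 ∧ ∀ f : Fin 4 → ZMod 3,
      (∑ g : Fin 4 → ZMod 3, (∏ ℓ : Fin 4, F3 (f ℓ) (g ℓ)) * ame43 g) = c * ame43 f := by
  refine ⟨1, norm_one, fun f => ?_⟩
  have hψ := isPrimitive_stdAddChar 3
  calc ∑ g, (∏ ℓ, F3 (f ℓ) (g ℓ)) * ame43 g
      = 1 / 3 * ((∑ i, stdAddChar (i * (f 0 + f 2 + 2 * f 3))) *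
          (∑ j, stdAddChar (j * (f 1 + f 2 + f 3))) / 9) := by
        simp_rw [sum_mul_ame43, prod_F3_ame43Word, Finset.sum_mul_sum, Finset.sum_div]
    _ = 1 * ame43 f := by
        simp only [AddChar.sum_mulShift _ hψ, ame43_eq_ite, ame43Word_eqns_iff_orthogonal,
          ite_and]
        split_ifs <;> norm_num
end
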